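/- Let V be a finite type and f, g : Finset V → ℝ submodular with g(∅) = 0. Fix X ⊆ V, let m_X be the modular upper bound of f tight at X given by m_X(S) := f(X) − Σ_{v∈X\S} (f(X) − f(X \ {v})) + Σ_{v∈S\X} (f({v}) − f(∅)), and let σ be any bijection from Fin |V| to V whose first |X| elements enumerate X, with h_σ(S) := Σ_{v∈S} (g(S_{idx(v)+1}) − g(S_{idx(v)})) the associated prefix-difference modular lower bound of g (S_i denoting the i-th prefix of σ). Then the modular function S ↦ m_X(S) − h_σ(S) satisfies m_X(S) − h_σ(S) ≥ f(S) − g(S) for all S ⊆ V, with equality at S = X. -/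

import Mathlib

/-- A set function `f : Finset V → ℝ` is submodular if adding an element to a smaller
set gains at least as much as adding it to a larger set:
`f(A ∪ {v}) − f(A) ≥ f(B ∪ {v}) − f(B)` for all `A ⊆ B` and `v ∉ B`. -/
def Submodular {V : Type*} [DecidableEq V] (f : Finset V → ℝ) : Prop :=
  ∀ ⦃A B : Finset V⦄, A ⊆ B → ∀ v ∉ B,
    f (insert v B) - f B ≤ f (insert v A) - f A

/-- The modular upper bound of `f` tight at `X`:
`m_X(S) = f(X) − Σ_{v∈X\S} (f(X) − f(X \ {v})) + Σ_{v∈S\X} (f({v}) − f(∅))`. -/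
noncomputable def modularUB {V : Type*} [DecidableEq V] (f : Finset V → ℝ)
    (X S : Finset V) : ℝ :=
  f X - ∑ v ∈ X \ S, (f X - f (X.erase v)) + ∑ v ∈ S \ X, (f {v} - f ∅)

/-- The `i`-th prefix `S_i = {σ(0), …, σ(i−1)}` of the ordering `σ`. -/
def prefixSet {V : Type*} [DecidableEq V] {n : ℕ} (σ : Fin n ≃ V) (i : ℕ) : Finset V :=
  (Finset.univ.filter fun j : Fin n => (j : ℕ) < i).image σ

/-- The prefix gain `Δ_σ(v) = g(S_{idx(v)+1}) − g(S_{idx(v)})` where `idx(v) = σ⁻¹(v)`. -/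
noncomputable def prefixGain {V : Type*} [DecidableEq V] {n : ℕ} (σ : Fin n ≃ V)
    (g : Finset V → ℝ) (v : V) : ℝ :=
  g (prefixSet σ ((σ.symm v : ℕ) + 1)) - g (prefixSet σ (σ.symm v : ℕ))

/-- The modular lower bound `h_σ(S) = Σ_{v∈S} Δ_σ(v)`. -/
noncomputable def modularLB {V : Type*} [DecidableEq V] {n : ℕ} (σ : Fin n ≃ V)
    (g : Finset V → ℝ) (S : Finset V) : ℝ :=
  ∑ v ∈ S, prefixGain σ g v

/-!
Both bounds come from chains along which submodularity compares marginal gains. Passing from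
`X` to `S` by deleting `X \ S` and then adding `S \ X` one element at a time, each step changes
`f` by at most the corresponding term of `m_X`, so `f ≤ m_X`. Along the chain `S ∩ S_i`, each
element of `S` gains at least as much as along the full prefix chain `S_i`, so `h_σ ≤ g`. When `X`
is itself a prefix `S_|X|`, the two chains agree on `X` and `h_σ(X)` telescopes to `g X`; and
`m_X(X) = f X` outright.
-/

open Finset

section Prefix

variable {V : Type*} [DecidableEq V] {n : ℕ} (σ : Fin n ≃ V)

lemma mem_prefixSet {i : ℕ} {v : V} : v ∈ prefixSet σ i ↔ (σ.symm v : ℕ) < i := by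
  simp only [prefixSet, mem_image, mem_filter, mem_univ, true_and]
  constructor
  · rintro ⟨j, hj, rfl⟩
    simpa using hj
  · exact fun h => ⟨σ.symm v, h, σ.apply_symm_apply v⟩

lemma prefixSet_mono {i j : ℕ} (h : i ≤ j) : prefixSet σ i ⊆ prefixSet σ j := fun _ hv =>
  (mem_prefixSet σ).2 (((mem_prefixSet σ).1 hv).trans_le h)

@[simp]
lemma prefixSet_zero : prefixSet σ 0 = ∅ := by
  ext v
  simp [mem_prefixSet]

lemma prefixSet_succ_symm (v : V) :
    prefixSet σ ((σ.symm v : ℕ) + 1) = insert v (prefixSet σ (σ.symm v)) := by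
  ext u
  simp only [mem_insert, mem_prefixSet, Nat.lt_succ_iff_lt_or_eq, Fin.val_inj,
    σ.symm_apply_eq, σ.apply_symm_apply]
  tauto

lemma notMem_prefixSet_symm (v : V) : v ∉ prefixSet σ (σ.symm v) := by
  simp [mem_prefixSet]

variable [Fintype V]

@[simp]
lemma prefixSet_length : prefixSet σ n = univ := by
  ext v
  simp [mem_prefixSet]

/-- Intersecting the prefix chain with `S` gives a chain from `∅` to `S` that only grows at
elements of `S`, so the increments of `g` along it telescope over `S`. -/
lemma sum_inter_prefixSet_sub (g : Finset V → ℝ) (S : Finset V) :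
    ∑ v ∈ S, (g (S ∩ prefixSet σ ((σ.symm v : ℕ) + 1)) - g (S ∩ prefixSet σ (σ.symm v)))
      = g S - g ∅ := by
  set F : ℕ → ℝ := fun i => g (S ∩ prefixSet σ i)
  have h_outside : ∀ v ∈ univ, v ∉ S → F ((σ.symm v : ℕ) + 1) - F (σ.symm v) = 0 := by
    intro v _ hv
    simp only [F, prefixSet_succ_symm, inter_insert_of_notMem hv, sub_self]
  calc ∑ v ∈ S, (F ((σ.symm v : ℕ) + 1) - F (σ.symm v))
      = ∑ v, (F ((σ.symm v : ℕ) + 1) - F (σ.symm v)) := sum_subset (subset_univ S) h_outside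
    _ = ∑ i : Fin n, (F (i + 1) - F i) := Equiv.sum_comp σ.symm fun i => F (i + 1) - F i
    _ = ∑ i ∈ range n, (F (i + 1) - F i) := Fin.sum_univ_eq_sum_range (fun i => F (i + 1) - F i) n
    _ = g S - g ∅ := by
      simp only [sum_range_sub F, F, prefixSet_length, prefixSet_zero, inter_univ, inter_empty]

lemma modularLB_le {g : Finset V → ℝ} (hg : Submodular g) (hg0 : g ∅ = 0) (S : Finset V) :
    modularLB σ g S ≤ g S := by
  have h_gain : ∀ v ∈ S, prefixGain σ g v ≤
      g (S ∩ prefixSet σ ((σ.symm v : ℕ) + 1)) - g (S ∩ prefixSet σ (σ.symm v)) := by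
    intro v hv
    have h := hg (inter_subset_right (s₁ := S)) v (notMem_prefixSet_symm σ v)
    rwa [← inter_insert_of_mem hv, ← prefixSet_succ_symm] at h
  calc modularLB σ g S
      ≤ ∑ v ∈ S, (g (S ∩ prefixSet σ ((σ.symm v : ℕ) + 1)) - g (S ∩ prefixSet σ (σ.symm v))) :=
        sum_le_sum h_gain
    _ = g S := by rw [sum_inter_prefixSet_sub, hg0, sub_zero]

lemma modularLB_prefixSet (g : Finset V → ℝ) (k : ℕ) :
    modularLB σ g (prefixSet σ k) = g (prefixSet σ k) - g ∅ := by
  rw [← sum_inter_prefixSet_sub σ g]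
  refine sum_congr rfl fun v hv => ?_
  have hv_idx := (mem_prefixSet σ).1 hv
  rw [inter_eq_right.2 (prefixSet_mono σ hv_idx), inter_eq_right.2 (prefixSet_mono σ hv_idx.le)]
  rfl

end Prefix

section UpperBound

variable {V : Type*} [DecidableEq V] {f : Finset V → ℝ}

lemma Submodular.le_add_sum_singleton (hf : Submodular f) {A : Finset V} (T : Finset V)
    (hAT : Disjoint A T) : f (A ∪ T) ≤ f A + ∑ v ∈ T, (f {v} - f ∅) := by
  induction T using Finset.induction_on with
  | empty => simp
  | @insert v T hv ih =>
    rw [disjoint_insert_right] at hAT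
    have h_step := hf (empty_subset (A ∪ T)) v (by simp [hAT.1, hv])
    rw [insert_empty_eq] at h_step
    rw [union_insert, sum_insert hv]
    linarith [ih hAT.2]

lemma Submodular.sdiff_le (hf : Submodular f) (X : Finset V) {T : Finset V} (hTX : T ⊆ X) :
    f (X \ T) ≤ f X - ∑ v ∈ T, (f X - f (X.erase v)) := by
  induction T using Finset.induction_on with
  | empty => simp
  | @insert v T hv ih =>
    rw [insert_subset_iff] at hTX
    have h_step := hf (erase_subset_erase v (sdiff_subset : X \ T ⊆ X)) v (notMem_erase v X)
    rw [insert_erase hTX.1, insert_erase (mem_sdiff.2 ⟨hTX.1, hv⟩)] at h_step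
    rw [sdiff_insert, sum_insert hv]
    linarith [ih hTX.2]

lemma Submodular.le_modularUB (hf : Submodular f) (X S : Finset V) : f S ≤ modularUB f X S := by
  have h_remove := hf.sdiff_le X (sdiff_subset : X \ S ⊆ X)
  have h_add := hf.le_add_sum_singleton (S \ X) (disjoint_sdiff_inter S X).symm
  rw [sdiff_sdiff_right_self, inf_eq_inter, inter_comm] at h_remove
  rw [union_comm, sdiff_union_inter] at h_add
  rw [modularUB]
  linarith

@[simp]
lemma modularUB_self (f : Finset V → ℝ) (X : Finset V) : modularUB f X X = f X := by
  simp [modularUB]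

end UpperBound

theorem stmt_14 {V : Type*} [Fintype V] [DecidableEq V]
    (f g : Finset V → ℝ) (hf : Submodular f) (hg : Submodular g) (hg0 : g ∅ = 0)
    (X : Finset V) (σ : Fin (Fintype.card V) ≃ V)
    (hσ : prefixSet σ X.card = X) :
    (∀ S : Finset V, f S - g S ≤ modularUB f X S - modularLB σ g S) ∧
    modularUB f X X - modularLB σ g X = f X - g X := by
  refine ⟨fun S => ?_, ?_⟩
  · linarith [hf.le_modularUB X S, modularLB_le σ hg hg0 S]
  · rw [modularUB_self, ← hσ, modularLB_prefixSet, hg0, sub_zero]
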